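/- arXiv:1710.00214 — 4 statements merged into one kernel-verified Lean document; each statement's English description precedes it below -/
import Mathlib

section
/- Let K be a field with char(K) > 3, a, b ∈ K, and let A, B, C be points on the affine curve y² = x³ + ax + b with pairwise distinct x-coordinates, such that also the points A+B and B+C (computed by the chord formula) have x-coordinates distinct from x_C and x_A respectively, and A+B ≠ -C, B+C ≠ -A. Then (A+B)+C = A+(B+C), where + is given by the chord formula: for P = (x_P,y_P), Q = (x_Q,y_Q) with x_P ≠ x_Q, P+Q = (α² - x_P - x_Q, -y_P + α(x_P - (α² - x_P - x_Q))) with α = (y_P - y_Q)/(x_P - x_Q). -/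
/-!
Away from singular points, `chord` is the addition formula of Mathlib's group of points of the
Weierstrass curve `y² = x³ + ax + b`, so associativity comes from `add_assoc` in that group.
A singular point `S` of the curve has `y_S = 0` (as `2 ≠ 0`) and `x_S` a double root of the cubic,
so the line through `S` and any other point `P` of the curve meets it only at `S` (twice) and `P`:
then `chord P S = chord S P = S`, and both sides of the identity collapse to `S`.
-/

/-- The chord construction: sum of two affine points with distinct x-coordinates. -/
def chord {K : Type*} [Field K] (P Q : K × K) : K × K :=
  let α := (P.2 - Q.2) / (P.1 - Q.1)
  let x := α ^ 2 - P.1 - Q.1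
  (x, -P.2 + α * (P.1 - x))

open WeierstrassCurve.Affine

section

variable {K : Type*} [Field K] {a b : K} {P Q S : K × K}

def shortWeierstrass (a b : K) : WeierstrassCurve.Affine K := ⟨0, 0, 0, a, b⟩

lemma shortWeierstrass_equation_iff (x y : K) :
    (shortWeierstrass a b).Equation x y ↔ y ^ 2 = x ^ 3 + a * x + b := by
  simp only [equation_iff, shortWeierstrass]
  constructor <;> intro h <;> linear_combination h

lemma chord_comm (hx : P.1 ≠ Q.1) : chord P Q = chord Q P := by
  have hx' : P.1 - Q.1 ≠ 0 := sub_ne_zero.mpr hx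
  have hslope : (Q.2 - P.2) / (Q.1 - P.1) = (P.2 - Q.2) / (P.1 - Q.1) := by
    rw [← neg_sub P.2, ← neg_sub P.1, neg_div_neg_eq]
  simp only [chord, hslope, Prod.mk.injEq]
  constructor
  · ring
  · field_simp
    ring

lemma chord_eq_addX_addY [DecidableEq K] (hx : P.1 ≠ Q.1) :
    chord P Q = ((shortWeierstrass a b).addX P.1 Q.1 ((shortWeierstrass a b).slope P.1 Q.1 P.2 Q.2),
      (shortWeierstrass a b).addY P.1 Q.1 P.2
        ((shortWeierstrass a b).slope P.1 Q.1 P.2 Q.2)) := by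
  simp only [chord, slope_of_X_ne hx, addX, addY, negAddY, negY, shortWeierstrass, Prod.mk.injEq]
  constructor <;> ring

lemma equation_chord [DecidableEq K] (hP : (shortWeierstrass a b).Equation P.1 P.2)
    (hQ : (shortWeierstrass a b).Equation Q.1 Q.2) (hx : P.1 ≠ Q.1) :
    (shortWeierstrass a b).Equation (chord P Q).1 (chord P Q).2 := by
  rw [chord_eq_addX_addY hx]
  exact equation_add hP hQ fun h => hx h.1

lemma nonsingular_chord [DecidableEq K] (hP : (shortWeierstrass a b).Nonsingular P.1 P.2)
    (hQ : (shortWeierstrass a b).Nonsingular Q.1 Q.2) (hx : P.1 ≠ Q.1) :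
    (shortWeierstrass a b).Nonsingular (chord P Q).1 (chord P Q).2 := by
  rw [chord_eq_addX_addY hx]
  exact nonsingular_add hP hQ fun h => hx h.1

lemma some_add_some_eq_some_chord [DecidableEq K]
    (hP : (shortWeierstrass a b).Nonsingular P.1 P.2)
    (hQ : (shortWeierstrass a b).Nonsingular Q.1 Q.2) (hx : P.1 ≠ Q.1) :
    Point.some _ _ hP + Point.some _ _ hQ = Point.some _ _ (nonsingular_chord hP hQ hx) := by
  rw [Point.add_of_X_ne hx]
  congr 1 <;> rw [chord_eq_addX_addY hx]

lemma snd_eq_zero_and_deriv_eq_zero_of_not_nonsingular (h2 : (2 : K) ≠ 0)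
    (hS : (shortWeierstrass a b).Equation S.1 S.2)
    (hsing : ¬ (shortWeierstrass a b).Nonsingular S.1 S.2) :
    S.2 = 0 ∧ 3 * S.1 ^ 2 + a = 0 := by
  rw [nonsingular_iff'] at hsing
  push Not at hsing
  obtain ⟨hX, hY⟩ := hsing hS
  simp only [shortWeierstrass] at hX hY
  refine ⟨?_, by linear_combination -hX⟩
  have h2y : 2 * S.2 = 0 := by linear_combination hY
  exact (mul_eq_zero.mp h2y).resolve_left h2

lemma chord_eq_right_of_not_nonsingular (h2 : (2 : K) ≠ 0)
    (hS : (shortWeierstrass a b).Equation S.1 S.2)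
    (hsing : ¬ (shortWeierstrass a b).Nonsingular S.1 S.2)
    (hP : (shortWeierstrass a b).Equation P.1 P.2) (hx : P.1 ≠ S.1) : chord P S = S := by
  obtain ⟨hy, hdouble⟩ := snd_eq_zero_and_deriv_eq_zero_of_not_nonsingular h2 hS hsing
  rw [shortWeierstrass_equation_iff] at hS hP
  have hx' : P.1 - S.1 ≠ 0 := sub_ne_zero.mpr hx
  -- `x_S` is a double root of `x³ + ax + b`, so `y_P² = (x_P - x_S)² (x_P + 2 x_S)`
  have hslope : ((P.2 - S.2) / (P.1 - S.1)) ^ 2 = P.1 + 2 * S.1 := by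
    rw [div_pow, div_eq_iff (pow_ne_zero 2 hx')]
    linear_combination hP - hS + (P.1 - S.1) * hdouble + 2 * (S.2 - P.2) * hy
  have hline : (P.2 - S.2) / (P.1 - S.1) * (P.1 - S.1) = P.2 - S.2 := div_mul_cancel₀ _ hx'
  ext
  · simp only [chord, hslope]
    ring
  · simp only [chord, hslope]
    linear_combination hline - 2 * hy

lemma chord_eq_left_of_not_nonsingular (h2 : (2 : K) ≠ 0)
    (hS : (shortWeierstrass a b).Equation S.1 S.2)
    (hsing : ¬ (shortWeierstrass a b).Nonsingular S.1 S.2)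
    (hP : (shortWeierstrass a b).Equation P.1 P.2) (hx : S.1 ≠ P.1) : chord S P = S := by
  rw [chord_comm hx, chord_eq_right_of_not_nonsingular h2 hS hsing hP hx.symm]

end

theorem chord_assoc_general {K : Type*} [Field K] (h2 : (2 : K) ≠ 0)
    (a b : K) (A B C : K × K)
    (hA : A.2 ^ 2 = A.1 ^ 3 + a * A.1 + b)
    (hB : B.2 ^ 2 = B.1 ^ 3 + a * B.1 + b)
    (hC : C.2 ^ 2 = C.1 ^ 3 + a * C.1 + b)
    (hAB : A.1 ≠ B.1) (hBC : B.1 ≠ C.1) (hAC : A.1 ≠ C.1)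
    (hABC : (chord A B).1 ≠ C.1) (hBCA : (chord B C).1 ≠ A.1) :
    chord (chord A B) C = chord A (chord B C) := by
  classical
  rw [← shortWeierstrass_equation_iff] at hA hB hC
  by_cases sB : (shortWeierstrass a b).Nonsingular B.1 B.2
  swap
  · rw [chord_eq_right_of_not_nonsingular h2 hB sB hA hAB,
      chord_eq_left_of_not_nonsingular h2 hB sB hC hBC,
      chord_eq_right_of_not_nonsingular h2 hB sB hA hAB]
  by_cases sA : (shortWeierstrass a b).Nonsingular A.1 A.2
  swap
  · rw [chord_eq_left_of_not_nonsingular h2 hA sA hB hAB,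
      chord_eq_left_of_not_nonsingular h2 hA sA hC hAC,
      chord_eq_left_of_not_nonsingular h2 hA sA (equation_chord hB hC hBC) hBCA.symm]
  by_cases sC : (shortWeierstrass a b).Nonsingular C.1 C.2
  swap
  · rw [chord_eq_right_of_not_nonsingular h2 hC sC (equation_chord hA hB hAB) hABC,
      chord_eq_right_of_not_nonsingular h2 hC sC hB hBC,
      chord_eq_right_of_not_nonsingular h2 hC sC hA hAC]
  have assoc := add_assoc (Point.some _ _ sA) (Point.some _ _ sB) (Point.some _ _ sC)
  rw [some_add_some_eq_some_chord sA sB hAB, some_add_some_eq_some_chord _ sC hABC,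
    some_add_some_eq_some_chord sB sC hBC, some_add_some_eq_some_chord sA _ hBCA.symm] at assoc
  injection assoc with hx hy
  exact Prod.ext hx hy

theorem chord_assoc {K : Type*} [Field K] (h2 : (2 : K) ≠ 0) (h3 : (3 : K) ≠ 0)
    (a b : K) (A B C : K × K)
    (hA : A.2 ^ 2 = A.1 ^ 3 + a * A.1 + b)
    (hB : B.2 ^ 2 = B.1 ^ 3 + a * B.1 + b)
    (hC : C.2 ^ 2 = C.1 ^ 3 + a * C.1 + b)
    (hAB : A.1 ≠ B.1) (hBC : B.1 ≠ C.1) (hAC : A.1 ≠ C.1)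
    (hABC : (chord A B).1 ≠ C.1) (hBCA : (chord B C).1 ≠ A.1)
    (hABnC : chord A B ≠ (C.1, -C.2)) (hBCnA : chord B C ≠ (A.1, -A.2)) :
    chord (chord A B) C = chord A (chord B C) :=
  chord_assoc_general h2 a b A B C hA hB hC hAB hBC hAC hABC hBCA
end

section
/- Let E be a Weierstrass elliptic curve y² = x³ + ax + b over a field K with char(K) > 3 and 4a³+27b² ≠ 0, with the chord-tangent addition. The cancellation law holds: if A + B = A + B' for A, B, B' ∈ E, then B = B'. -/
/-- Points of the elliptic curve: the point at infinity `zero` and affine points. -/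
inductive Pt (K : Type*) where
  | zero : Pt K
  | some (x y : K) : Pt K

namespace Pt

variable {K : Type*} [Field K]

/-- Negation: reflection about the x-axis. -/
def neg : Pt K → Pt K
  | .zero => .zero
  | .some x y => .some x (-y)

open scoped Classical in
/-- The chord-tangent addition on the curve `y² = x³ + a x + b`. -/
noncomputable def add (a : K) : Pt K → Pt K → Pt K
  | .zero, P => P
  | P, .zero => P
  | .some x₁ y₁, .some x₂ y₂ =>
    if x₁ = x₂ ∧ y₁ = -y₂ then .zero
    else
      let α := if x₁ = x₂ then (3 * x₁ ^ 2 + a) / (2 * y₁) else (y₁ - y₂) / (x₁ - x₂)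
      let x₃ := α ^ 2 - x₁ - x₂
      .some x₃ (-y₁ + α * (x₁ - x₃))

end Pt

/-- Membership in the affine Weierstrass curve (the point at infinity belongs). -/
def OnCurve {K : Type*} [Field K] (a b : K) : Pt K → Prop
  | .zero => True
  | .some x y => y ^ 2 = x ^ 3 + a * x + b

/-! The chord-tangent formulas are exactly Mathlib's group law on the Weierstrass curve
with `a₁ = a₂ = a₃ = 0`, `a₄ = a`, `a₆ = b`. Its discriminant `-16 (4a³ + 27b²)` is nonzero,
so every affine point on it is nonsingular. Sending curve points to Mathlib's points is
therefore injective and additive, and cancellation is inherited from the group `W.Point`. -/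

open WeierstrassCurve WeierstrassCurve.Affine

namespace Pt

open scoped Classical

variable {K : Type*} [Field K]

def shortW (a b : K) : WeierstrassCurve.Affine K :=
  { a₁ := 0, a₂ := 0, a₃ := 0, a₄ := a, a₆ := b }

variable {a b : K}

lemma shortW_Δ : (shortW a b).Δ = -16 * (4 * a ^ 3 + 27 * b ^ 2) := by
  simp only [WeierstrassCurve.Δ, b₂, b₄, b₆, b₈, shortW]
  ring

lemma shortW_equation_iff {x y : K} :
    (shortW a b).Equation x y ↔ y ^ 2 = x ^ 3 + a * x + b := by
  rw [equation_iff]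
  simp only [shortW]
  constructor <;> intro h <;> linear_combination h

lemma shortW_negY (x y : K) : (shortW a b).negY x y = -y := by
  simp [negY, shortW]

lemma shortW_nonsingular (h2 : (2 : K) ≠ 0) (hab : 4 * a ^ 3 + 27 * b ^ 2 ≠ 0) {x y : K}
    (h : y ^ 2 = x ^ 3 + a * x + b) : (shortW a b).Nonsingular x y := by
  have h16 : (-16 : K) ≠ 0 := by
    rw [show (-16 : K) = -2 ^ 4 by norm_num]
    exact neg_ne_zero.mpr (pow_ne_zero 4 h2)
  have hΔ : (shortW a b).Δ ≠ 0 := by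
    rw [shortW_Δ]
    exact mul_ne_zero h16 hab
  exact (equation_iff_nonsingular_of_Δ_ne_zero hΔ).mp (shortW_equation_iff.mpr h)

lemma shortW_slope {x₁ x₂ y₁ y₂ : K} (hxy : ¬(x₁ = x₂ ∧ y₁ = -y₂)) :
    (shortW a b).slope x₁ x₂ y₁ y₂ =
      if x₁ = x₂ then (3 * x₁ ^ 2 + a) / (2 * y₁) else (y₁ - y₂) / (x₁ - x₂) := by
  split_ifs with hx
  · rw [slope_of_Y_ne hx (by rw [shortW_negY]; exact fun hy => hxy ⟨hx, hy⟩), shortW_negY]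
    simp only [shortW, hx]
    ring
  · exact slope_of_X_ne hx

/-- Off-curve affine points are sent to `0`; only the values on curve points matter. -/
noncomputable def toPoint (W : WeierstrassCurve.Affine K) : Pt K → W.Point
  | .zero => 0
  | .some x y => if h : W.Nonsingular x y then .some x y h else 0

lemma toPoint_some {W : WeierstrassCurve.Affine K} {x y : K} (h : W.Nonsingular x y) :
    toPoint W (.some x y) = .some x y h :=
  dif_pos h

lemma toPoint_injOn (h2 : (2 : K) ≠ 0) (hab : 4 * a ^ 3 + 27 * b ^ 2 ≠ 0) :
    Set.InjOn (toPoint (shortW a b)) {P | OnCurve a b P} := by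
  rintro (_ | ⟨x, y⟩) hP (_ | ⟨x', y'⟩) hQ h
  · rfl
  · rw [toPoint, toPoint_some (shortW_nonsingular h2 hab hQ)] at h
    exact absurd h.symm (Point.some_ne_zero _)
  · rw [toPoint, toPoint_some (shortW_nonsingular h2 hab hP)] at h
    exact absurd h (Point.some_ne_zero _)
  · rw [toPoint_some (shortW_nonsingular h2 hab hP),
      toPoint_some (shortW_nonsingular h2 hab hQ), Point.some.injEq] at h
    rw [h.1, h.2]

lemma toPoint_add_some {x₁ y₁ x₂ y₂ : K} (h₁ : (shortW a b).Nonsingular x₁ y₁)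
    (h₂ : (shortW a b).Nonsingular x₂ y₂) :
    toPoint (shortW a b) (add a (.some x₁ y₁) (.some x₂ y₂)) =
      Point.some x₁ y₁ h₁ + Point.some x₂ y₂ h₂ := by
  by_cases hxy : x₁ = x₂ ∧ y₁ = -y₂
  · rw [Point.add_of_Y_eq hxy.1 (by rw [shortW_negY]; exact hxy.2)]
    simp [add, hxy, toPoint]
  · have hxy' : ¬(x₁ = x₂ ∧ y₁ = (shortW a b).negY x₂ y₂) := by rwa [shortW_negY]
    rw [Point.add_some hxy', ← toPoint_some]
    simp only [add, if_neg hxy, addY, negAddY, addX, shortW_slope hxy, shortW_negY]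
    simp only [shortW]
    congr 2 <;> ring

lemma toPoint_add (h2 : (2 : K) ≠ 0) (hab : 4 * a ^ 3 + 27 * b ^ 2 ≠ 0) {P Q : Pt K}
    (hP : OnCurve a b P) (hQ : OnCurve a b Q) :
    toPoint (shortW a b) (add a P Q) = toPoint (shortW a b) P + toPoint (shortW a b) Q := by
  rcases P with _ | ⟨x₁, y₁⟩
  · rcases Q with _ | ⟨x₂, y₂⟩ <;> exact (zero_add _).symm
  rcases Q with _ | ⟨x₂, y₂⟩
  · exact (add_zero _).symm
  rw [toPoint_some (shortW_nonsingular h2 hab hP), toPoint_some (shortW_nonsingular h2 hab hQ)]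
  exact toPoint_add_some _ _

end Pt

theorem add_left_cancel'_general {K : Type*} [Field K] (h2 : (2 : K) ≠ 0)
    (a b : K) (hab : 4 * a ^ 3 + 27 * b ^ 2 ≠ 0)
    (A B B' : Pt K) (hA : OnCurve a b A) (hB : OnCurve a b B) (hB' : OnCurve a b B')
    (h : Pt.add a A B = Pt.add a A B') :
    B = B' := by
  classical
  have hB_eq : Pt.toPoint (Pt.shortW a b) B = Pt.toPoint (Pt.shortW a b) B' := by
    apply add_left_cancel (a := Pt.toPoint (Pt.shortW a b) A)
    rw [← Pt.toPoint_add h2 hab hA hB, ← Pt.toPoint_add h2 hab hA hB', h]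
  exact Pt.toPoint_injOn h2 hab hB hB' hB_eq

theorem add_left_cancel' {K : Type*} [Field K] (h2 : (2 : K) ≠ 0) (h3 : (3 : K) ≠ 0)
    (a b : K) (hab : 4 * a ^ 3 + 27 * b ^ 2 ≠ 0)
    (A B B' : Pt K) (hA : OnCurve a b A) (hB : OnCurve a b B) (hB' : OnCurve a b B')
    (h : Pt.add a A B = Pt.add a A B') :
    B = B' :=
  add_left_cancel'_general h2 a b hab A B B' hA hB hB' h
end

section
/- Let E be a Weierstrass elliptic curve y² = x³ + ax + b over a field K with char(K) > 3 and 4a³+27b² ≠ 0, with the chord-tangent addition. For all A, B ∈ E, (A + B) - B = A. -/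
namespace Pt

variable {K : Type*} [Field K]

open scoped Classical in
lemma add_some_some (a x₁ y₁ x₂ y₂ : K) :
    Pt.add a (.some x₁ y₁) (.some x₂ y₂) =
      if x₁ = x₂ ∧ y₁ = -y₂ then .zero
      else
        let α := if x₁ = x₂ then (3 * x₁ ^ 2 + a) / (2 * y₁) else (y₁ - y₂) / (x₁ - x₂)
        let x₃ := α ^ 2 - x₁ - x₂
        .some x₃ (-y₁ + α * (x₁ - x₃)) := rfl

lemma add_zero_left (a : K) (P : Pt K) : Pt.add a .zero P = P := by cases P <;> rfl

lemma add_zero_right (a : K) (P : Pt K) : Pt.add a P .zero = P := by cases P <;> rfl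

lemma main_aux (h2 : (2 : K) ≠ 0) (a b : K) (hab : 4 * a ^ 3 + 27 * b ^ 2 ≠ 0)
    (x₁ y₁ x₂ y₂ α x₃ y₃ : K)
    (hx₃ : x₃ = α ^ 2 - x₁ - x₂) (hy₃ : y₃ = -y₁ + α * (x₁ - x₃))
    (h1 : y₁ ^ 2 = x₁ ^ 3 + a * x₁ + b) (hB : y₂ ^ 2 = x₂ ^ 3 + a * x₂ + b)
    (hne : ¬(x₁ = x₂ ∧ y₁ = -y₂))
    (hline : y₂ - y₁ = α * (x₂ - x₁))
    (htan : x₁ = x₂ → 2 * y₁ * α = 3 * x₁ ^ 2 + a) :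
    Pt.add a (Pt.some x₃ y₃) (Pt.some x₂ (-y₂)) = Pt.some x₁ y₁ := by
  have hsum : y₃ + y₂ = α * (x₂ - x₃) := by
    rw [hy₃]; linear_combination hline
  rw [add_some_some]
  by_cases hz : x₃ = x₂ ∧ y₃ = - -y₂
  · -- degenerate case: contradiction with nonsingularity
    exfalso
    obtain ⟨hzx, hzy⟩ := hz
    rw [neg_neg] at hzy
    have hy2 : y₂ = 0 := by
      have h0 : (2 : K) * y₂ = 0 := by
        have hs := hsum; rw [hzx, hzy] at hs; linear_combination hs
      exact (mul_eq_zero.mp h0).resolve_left h2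
    by_cases hx12 : x₁ = x₂
    · have hsq : y₁ ^ 2 = 0 := by rw [h1, hx12, ← hB, hy2]; ring
      have hy1 : y₁ = 0 := sq_eq_zero_iff.mp hsq
      exact hne ⟨hx12, by rw [hy1, hy2, neg_zero]⟩
    · have hd : x₁ - x₂ ≠ 0 := sub_ne_zero.mpr hx12
      have hy1 : y₁ = α * (x₁ - x₂) := by
        have hl := hline; rw [hy2] at hl; linear_combination -hl
      have hα2 : α ^ 2 = x₁ + 2 * x₂ := by
        have hx := hzx; rw [hx₃] at hx; linear_combination hx
      have hB0 : x₂ ^ 3 + a * x₂ + b = 0 := by rw [← hB, hy2]; ring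
      have key : (x₁ - x₂) * (a + 3 * x₂ ^ 2) = 0 := by
        linear_combination (-1 : K) * h1 + (y₁ + α * (x₁ - x₂)) * hy1 +
          (x₁ - x₂) ^ 2 * hα2 - hB0
      have ha : a = -3 * x₂ ^ 2 := by
        have hk := (mul_eq_zero.mp key).resolve_left hd
        linear_combination hk
      have hb : b = 2 * x₂ ^ 3 := by
        rw [ha] at hB0; linear_combination hB0
      apply hab
      rw [ha, hb]; ring
  · rw [if_neg hz]
    by_cases hx32 : x₃ = x₂
    · -- tangent case on -B
      have hzy : y₃ ≠ -(-y₂) := fun h => hz ⟨hx32, h⟩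
      rw [neg_neg] at hzy
      have hy3 : y₃ = -y₂ := by
        have hs := hsum; rw [hx32] at hs; linear_combination hs
      have hy2 : y₂ ≠ 0 := by
        intro h0; apply hzy; rw [hy3, h0, neg_zero]
      have hF3 : 2 * α * y₂ = 3 * x₂ ^ 2 + a := by
        by_cases hx12 : x₁ = x₂
        · have hy12 : y₁ = y₂ := by
            have hl := hline; rw [hx12] at hl; linear_combination -hl
          have ht := htan hx12
          rw [hx12, hy12] at ht; linear_combination ht
        · have hd : x₁ - x₂ ≠ 0 := sub_ne_zero.mpr hx12
          have hα2 : α ^ 2 = x₁ + 2 * x₂ := by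
            have hx := hx32; rw [hx₃] at hx; linear_combination hx
          have key : (x₁ - x₂) * (2 * α * y₂ - 3 * x₂ ^ 2 - a) = 0 := by
            linear_combination h1 - hB + (y₁ + y₂ + α * (x₁ - x₂)) * hline -
              (x₁ - x₂) ^ 2 * hα2
          have hk := (mul_eq_zero.mp key).resolve_left hd
          linear_combination hk
      simp only [if_pos hx32]
      have hα' : (3 * x₃ ^ 2 + a) / (2 * y₃) = -α := by
        rw [hx32, hy3, ← hF3]
        rw [div_eq_iff (by simpa using mul_ne_zero h2 (neg_ne_zero.mpr hy2))]
        ring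
      rw [hα']
      simp only [Pt.some.injEq]
      refine ⟨by linear_combination -hx₃, by linear_combination -hy₃ - α * hx₃⟩
    · -- chord case
      simp only [if_neg hx32]
      have hα' : (y₃ - -y₂) / (x₃ - x₂) = -α := by
        have hnum : y₃ - -y₂ = -α * (x₃ - x₂) := by linear_combination hsum
        rw [hnum, mul_div_cancel_right₀ _ (sub_ne_zero.mpr hx32)]
      rw [hα']
      simp only [Pt.some.injEq]
      refine ⟨by linear_combination -hx₃, by linear_combination -hy₃ - α * hx₃⟩

end Pt


theorem elliptic_add_sub_cancel {K : Type*} [Field K] (h2 : (2 : K) ≠ 0) (h3 : (3 : K) ≠ 0)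
    (a b : K) (hab : 4 * a ^ 3 + 27 * b ^ 2 ≠ 0)
    (A B : Pt K) (hA : OnCurve a b A) (hB : OnCurve a b B) :
    Pt.add a (Pt.add a A B) B.neg = A := by
  cases A with
  | zero =>
    rw [Pt.add_zero_left]
    cases B with
    | zero => rfl
    | some x y =>
      show Pt.add a (.some x y) (.some x (-y)) = .zero
      rw [Pt.add_some_some, if_pos ⟨rfl, (neg_neg y).symm⟩]
  | some x₁ y₁ =>
    cases B with
    | zero =>
      show Pt.add a (Pt.add a (Pt.some x₁ y₁) .zero) .zero = Pt.some x₁ y₁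
      rw [Pt.add_zero_right, Pt.add_zero_right]
    | some x₂ y₂ =>
      have h1 : y₁ ^ 2 = x₁ ^ 3 + a * x₁ + b := hA
      have hBe : y₂ ^ 2 = x₂ ^ 3 + a * x₂ + b := hB
      rw [Pt.add_some_some]
      by_cases hne : x₁ = x₂ ∧ y₁ = -y₂
      · rw [if_pos hne, Pt.add_zero_left]
        show Pt.some x₂ (-y₂) = Pt.some x₁ y₁
        rw [hne.1, hne.2]
      · rw [if_neg hne]
        show Pt.add a (Pt.some _ _) (Pt.some x₂ (-y₂)) = Pt.some x₁ y₁
        refine Pt.main_aux h2 a b hab x₁ y₁ x₂ y₂ _ _ _ rfl rfl h1 hBe hne ?_ ?_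
        · by_cases hx : x₁ = x₂
          · rw [if_pos hx]
            subst hx
            have hsq : (y₁ - y₂) * (y₁ + y₂) = 0 := by linear_combination h1 - hBe
            rcases mul_eq_zero.mp hsq with h | h
            · have : y₁ = y₂ := by linear_combination h
              rw [this]; ring
            · exact absurd ⟨rfl, eq_neg_of_add_eq_zero_left h⟩ hne
          · rw [if_neg hx]
            have hd : x₁ - x₂ ≠ 0 := sub_ne_zero.mpr hx
            field_simp
            ring
        · intro hx
          rw [if_pos hx]
          have hy1 : y₁ ≠ 0 := by
            intro h0
            have hsq : y₂ ^ 2 = 0 := by rw [hBe, ← hx, ← h1, h0]; ring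
            have hy20 : y₂ = 0 := sq_eq_zero_iff.mp hsq
            exact hne ⟨hx, by rw [h0, hy20, neg_zero]⟩
          field_simp
end

section
/- Let E be a Weierstrass elliptic curve y² = x³ + ax + b over a field K with char(K) > 3 and 4a³+27b² ≠ 0, with the chord-tangent addition. For all A, B ∈ E: (A + B) + (A + B) = A + (B + (A + B)). -/
/-!
Mathlib's `WeierstrassCurve.Affine.Point` already carries an abelian group law, defined by the same
chord-tangent formulas. When `2 ≠ 0` and `4a³ + 27b² ≠ 0` the curve `y² = x³ + ax + b` has nonzero
discriminant `-16(4a³ + 27b²)`, so every solution is a nonsingular point; forgetting the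
nonsingularity proof maps that group onto the points of `OnCurve a b` and turns `+` into `Pt.add a`.
Associativity, and in particular the case `C = A + B`, is then transported from the group.
-/

namespace Pt

open WeierstrassCurve

variable {K : Type*} [Field K]

def shortWeierstrass (a b : K) : WeierstrassCurve K := ⟨0, 0, 0, a, b⟩

instance (a b : K) : (shortWeierstrass a b).IsShortNF := ⟨rfl, rfl, rfl⟩

@[simp]
lemma shortWeierstrass_a₄ (a b : K) : (shortWeierstrass a b).a₄ = a := rfl

@[simp]
lemma shortWeierstrass_a₆ (a b : K) : (shortWeierstrass a b).a₆ = b := rfl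

@[simp]
lemma shortWeierstrass_negY (a b x y : K) : (shortWeierstrass a b).toAffine.negY x y = -y := by
  simp [Affine.negY]

variable {a b : K}

lemma shortWeierstrass_equation_iff {x y : K} :
    (shortWeierstrass a b).toAffine.Equation x y ↔ y ^ 2 = x ^ 3 + a * x + b := by
  rw [Affine.equation_iff]
  simp

def ofPoint : (shortWeierstrass a b).toAffine.Point → Pt K
  | .zero => .zero
  | .some x y _ => .some x y

lemma shortWeierstrass_slope_of_X_eq [DecidableEq K] {x₁ x₂ y₁ y₂ : K} (hx : x₁ = x₂)
    (hy : y₁ ≠ -y₂) :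
    (shortWeierstrass a b).toAffine.slope x₁ x₂ y₁ y₂ = (3 * x₁ ^ 2 + a) / (2 * y₁) := by
  rw [Affine.slope_of_Y_ne hx (by simpa using hy)]
  simp [two_mul]

lemma ofPoint_add [DecidableEq K] (P Q : (shortWeierstrass a b).toAffine.Point) :
    ofPoint (P + Q) = add a (ofPoint P) (ofPoint Q) := by
  rcases P with _ | ⟨x₁, y₁, h₁⟩ <;> rcases Q with _ | ⟨x₂, y₂, h₂⟩
  · rfl
  · exact congrArg ofPoint (zero_add _)
  · exact congrArg ofPoint (add_zero _)
  by_cases hxy : x₁ = x₂ ∧ y₁ = -y₂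
  · rw [Affine.Point.add_of_Y_eq hxy.1 (by simpa using hxy.2)]
    simp only [ofPoint, add, if_pos hxy]
  rw [Affine.Point.add_some (by simpa using hxy)]
  simp only [ofPoint, add, if_neg hxy, Affine.addX, Affine.addY, Affine.negAddY,
    shortWeierstrass_negY, a₁_of_isShortNF, a₂_of_isShortNF]
  by_cases hx : x₁ = x₂
  · rw [if_pos hx, shortWeierstrass_slope_of_X_eq hx fun hy => hxy ⟨hx, hy⟩]
    congr 1 <;> ring
  · rw [if_neg hx, Affine.slope_of_X_ne hx]
    congr 1 <;> ring

lemma onCurve_ofPoint (P : (shortWeierstrass a b).toAffine.Point) :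
    OnCurve a b (ofPoint P) := by
  cases P with
  | zero => trivial
  | some x y h => exact shortWeierstrass_equation_iff.mp h.left

variable (h2 : (2 : K) ≠ 0) (hab : 4 * a ^ 3 + 27 * b ^ 2 ≠ 0)
include h2 hab

lemma shortWeierstrass_nonsingular {x y : K} (h : y ^ 2 = x ^ 3 + a * x + b) :
    (shortWeierstrass a b).toAffine.Nonsingular x y := by
  have hΔ : (shortWeierstrass a b).Δ ≠ 0 := by
    rw [Δ_of_isShortNF, shortWeierstrass_a₄, shortWeierstrass_a₆]
    have h16 : (-16 : K) ≠ 0 := by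
      simpa [show (-16 : K) = -2 ^ 4 by norm_num] using h2
    exact mul_ne_zero h16 hab
  exact (Affine.equation_iff_nonsingular_of_Δ_ne_zero hΔ).mp (shortWeierstrass_equation_iff.mpr h)

lemma exists_ofPoint_eq {P : Pt K} (hP : OnCurve a b P) :
    ∃ P' : (shortWeierstrass a b).toAffine.Point, ofPoint P' = P := by
  cases P with
  | zero => exact ⟨.zero, rfl⟩
  | some x y => exact ⟨.some _ _ (shortWeierstrass_nonsingular h2 hab hP), rfl⟩

lemma onCurve_add {A B : Pt K} (hA : OnCurve a b A) (hB : OnCurve a b B) :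
    OnCurve a b (add a A B) := by
  classical
  obtain ⟨A, rfl⟩ := exists_ofPoint_eq h2 hab hA
  obtain ⟨B, rfl⟩ := exists_ofPoint_eq h2 hab hB
  rw [← ofPoint_add]
  exact onCurve_ofPoint _

lemma add_assoc_of_onCurve {A B C : Pt K} (hA : OnCurve a b A) (hB : OnCurve a b B)
    (hC : OnCurve a b C) : add a (add a A B) C = add a A (add a B C) := by
  classical
  obtain ⟨A, rfl⟩ := exists_ofPoint_eq h2 hab hA
  obtain ⟨B, rfl⟩ := exists_ofPoint_eq h2 hab hB
  obtain ⟨C, rfl⟩ := exists_ofPoint_eq h2 hab hC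
  simp only [← ofPoint_add, add_assoc]

end Pt

theorem assoc_sum_case_general {K : Type*} [Field K] (h2 : (2 : K) ≠ 0)
    (a b : K) (hab : 4 * a ^ 3 + 27 * b ^ 2 ≠ 0)
    (A B : Pt K) (hA : OnCurve a b A) (hB : OnCurve a b B) :
    Pt.add a (Pt.add a A B) (Pt.add a A B)
      = Pt.add a A (Pt.add a B (Pt.add a A B)) :=
  Pt.add_assoc_of_onCurve h2 hab hA hB (Pt.onCurve_add h2 hab hA hB)

theorem assoc_sum_case {K : Type*} [Field K] (h2 : (2 : K) ≠ 0) (h3 : (3 : K) ≠ 0)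
    (a b : K) (hab : 4 * a ^ 3 + 27 * b ^ 2 ≠ 0)
    (A B : Pt K) (hA : OnCurve a b A) (hB : OnCurve a b B) :
    Pt.add a (Pt.add a A B) (Pt.add a A B)
      = Pt.add a A (Pt.add a B (Pt.add a A B)) :=
  assoc_sum_case_general h2 a b hab A B hA hB
end
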